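/- arXiv:2412.13996 — 7 statements merged into one kernel-verified Lean document; each statement's English description precedes it below -/
import Mathlib

section
/- Let Y be a finite set and (A, ≤) a partially ordered set. For a, b : Y → A, a ≡_perm b (meaning a ≤_perm b and b ≤_perm a) holds if and only if there exists a bijection σ of Y with a = b ∘ σ. -/
/-- For finite `Y` and a partial order `A`: `a ≡_perm b` (both `a ≤_perm b`
and `b ≤_perm a`) holds iff there exists a bijection `σ` of `Y` with
`a = b ∘ σ`. -/
theorem stmt_6 (Y : Type*) [Fintype Y] (A : Type*) [PartialOrder A]
    (a b : Y → A) :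
    ((∃ σ : Y ≃ Y, ∀ y, a y ≤ b (σ y)) ∧ (∃ σ : Y ≃ Y, ∀ y, b y ≤ a (σ y)))
      ↔ ∃ σ : Y ≃ Y, a = b ∘ σ := by
  constructor
  · rintro ⟨⟨σ, hσ⟩, ⟨τ, hτ⟩⟩
    -- key: if f ≤ f ∘ π pointwise for a permutation π of a finite type, then equality
    have key : ∀ (π : Equiv.Perm Y) (f : Y → A),
        (∀ y, f y ≤ f (π y)) → ∀ y, f (π y) ≤ f y := by
      intro π f hf y
      have chain : ∀ n : ℕ, ∀ z, f z ≤ f ((π ^ n) z) := by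
        intro n
        induction n with
        | zero => intro z; simp
        | succ n ih =>
          intro z
          calc f z ≤ f (π z) := hf z
            _ ≤ f ((π ^ n) (π z)) := ih (π z)
            _ = f ((π ^ (n + 1)) z) := by
                rw [pow_succ, Equiv.Perm.mul_apply]
      have h1 : 1 ≤ orderOf π := orderOf_pos π
      have h2 : π ^ (orderOf π - 1) * π = 1 := by
        rw [← pow_succ, Nat.sub_add_cancel h1, pow_orderOf_eq_one]
      have heq : (π ^ (orderOf π - 1)) (π y) = y := by
        have : (π ^ (orderOf π - 1)) (π y) = (π ^ (orderOf π - 1) * π) y := rfl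
        rw [this, h2, Equiv.Perm.one_apply]
      have := chain (orderOf π - 1) (π y)
      rwa [heq] at this
    set π : Equiv.Perm Y := σ * τ with hπ
    have hb : ∀ y, b y ≤ b (π y) := by
      intro y
      calc b y ≤ a (τ y) := hτ y
        _ ≤ b (σ (τ y)) := hσ (τ y)
        _ = b (π y) := rfl
    have hbe : ∀ y, b (π y) = b y := fun y => le_antisymm (key π b hb y) (hb y)
    have hab : ∀ y, a (τ y) = b y := by
      intro y
      refine le_antisymm ?_ (hτ y)
      calc a (τ y) ≤ b (σ (τ y)) := hσ (τ y)
        _ = b (π y) := rfl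
        _ = b y := hbe y
    refine ⟨τ.symm, funext fun x => ?_⟩
    have := hab (τ.symm x)
    simpa using this
  · rintro ⟨σ, h⟩
    subst h
    exact ⟨⟨σ, fun y => le_rfl⟩, ⟨σ.symm, fun y => by simp⟩⟩
end

section
/- Let Y be a finite set and (A, ≤_A) a well-founded partial order. Then the permuted-pointwise order ≤_perm on the quotient of Y → A by the equivalence a ≡_perm b (both a ≤_perm b and b ≤_perm a) is a well-founded partial order; in particular, there is no infinite sequence of functions a₀, a₁, ... : Y → A and bijections σ₁, σ₂, ... of Y such that for every i, a_{i+1}(σ_{i+1}(y)) ≤_A a_i(y) for all y ∈ Y and a_{i+1}(σ_{i+1}(x_i)) <_A a_i(x_i) for some x_i ∈ Y. -/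
/-!
Compose the bijections: with `τᵢ = σᵢ ∘ ⋯ ∘ σ₁`, the functions `aᵢ ∘ τᵢ` form a strictly
decreasing sequence in the pointwise order on `Y → A`. That order is well-founded because `Y`
is finite (Dickson-type lemma `Pi.wellFoundedLT`), so no such sequence exists.
-/

def Equiv.transPrefix {Y : Type*} (σ : ℕ → Y ≃ Y) : ℕ → Y ≃ Y
  | 0 => Equiv.refl Y
  | n + 1 => (transPrefix σ n).trans (σ (n + 1))

theorem Pi.comp_equiv_lt_comp_equiv {X Y A : Type*} [Preorder A] {f g : Y → A}
    (h : f < g) (e : X ≃ Y) : f ∘ e < g ∘ e :=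
  lt_of_le_not_ge (fun x => h.le (e x)) fun hgf =>
    h.not_ge fun y => by simpa using hgf (e.symm y)

theorem strictAnti_comp_transPrefix {Y A : Type*} [Preorder A] {a : ℕ → Y → A}
    {σ : ℕ → Y ≃ Y} (h : ∀ i, a (i + 1) ∘ σ (i + 1) < a i) :
    StrictAnti fun i => a i ∘ Equiv.transPrefix σ i :=
  strictAnti_nat_of_succ_lt fun i => Pi.comp_equiv_lt_comp_equiv (h i) (Equiv.transPrefix σ i)

/-- Well-foundedness of the permuted-pointwise order: for finite `Y` and a
well-founded partial order `A`, there is no infinite sequence of functions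
`a₀, a₁, … : Y → A` and bijections `σ₁, σ₂, …` of `Y` such that each step is
pointwise `≤` up to the permutation, with at least one strict decrease. -/
theorem stmt_7 (Y : Type*) [Fintype Y] (A : Type*) [PartialOrder A]
    (hwf : WellFounded ((· < ·) : A → A → Prop)) :
    ¬ ∃ (a : ℕ → Y → A) (σ : ℕ → Y ≃ Y),
      ∀ i, (∀ y, a (i + 1) (σ (i + 1) y) ≤ a i y) ∧
        ∃ x, a (i + 1) (σ (i + 1) x) < a i x := by
  rintro ⟨a, σ, h⟩
  have : WellFoundedLT A := ⟨hwf⟩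
  have hstep : ∀ i, a (i + 1) ∘ σ (i + 1) < a i := fun i => Pi.lt_def.2 (h i)
  exact not_strictAnti_of_wellFoundedLT _ (strictAnti_comp_transPrefix hstep)
end

section
/- If [a] <_perm [b] for equivalence classes of functions Y → A under ≡_perm (with Y finite and A partially ordered), then there exists a bijection σ of Y such that a ≤_pw b ∘ σ pointwise and a(y) < b(σ(y)) for at least one y ∈ Y. -/
/-- If `[a] <_perm [b]` (i.e. `a ≤_perm b` but not `b ≤_perm a`) for
`a b : Y → A` with `Y` finite and `A` a partial order, then there is a
bijection `σ` of `Y` with `a ≤ b ∘ σ` pointwise and at least one strict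
inequality. -/
theorem stmt_8 (Y : Type*) [Fintype Y] (A : Type*) [PartialOrder A]
    (a b : Y → A)
    (hle : ∃ σ : Y ≃ Y, ∀ y, a y ≤ b (σ y))
    (hnot : ¬ ∃ σ : Y ≃ Y, ∀ y, b y ≤ a (σ y)) :
    ∃ σ : Y ≃ Y, (∀ y, a y ≤ b (σ y)) ∧ ∃ y, a y < b (σ y) := by
  obtain ⟨σ, h⟩ := hle
  refine ⟨σ, h, ?_⟩
  by_contra hc
  push_neg at hc
  exact hnot ⟨σ.symm, fun y => by
    have h1 := h (σ.symm y)
    have h2 := hc (σ.symm y)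
    rw [σ.apply_symm_apply] at h1 h2
    exact (h1.lt_or_eq.resolve_left h2).ge⟩
end

section
/- Let Y be a finite set with a strict partial order <_Y and (A, ≤_A) a well-founded partial order. Define a ≤_lex b for a, b : Y → A by: for every y ∈ Y with a(y) ≰_A b(y) there exists y* <_Y y with a(y*) <_A b(y*). Then there is no infinite sequence a₀, a₁, ... : Y → A with a_{i+1} ≤_lex a_i and a_{i+1} ≠ a_i for all i. -/
/-- For finite `Y` with a strict partial order `<_Y` and a well-founded
partial order `A`, the domain-lexicographic order on `Y → A` admits no
infinite strictly decreasing sequence. -/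
theorem stmt_10 (Y : Type*) [Fintype Y] (A : Type*) [PartialOrder A]
    (hwfA : WellFounded ((· < ·) : A → A → Prop))
    (ltY : Y → Y → Prop) (hirr : ∀ y, ¬ ltY y y) (htrans : Transitive ltY) :
    ¬ ∃ a : ℕ → Y → A,
      ∀ i, (∀ y, ¬ a (i + 1) y ≤ a i y →
              ∃ ys, ltY ys y ∧ a (i + 1) ys < a i ys) ∧
           a (i + 1) ≠ a i := by
  rintro ⟨a, ha⟩
  -- endow Y with a partial order whose strict part contains ltY
  letI instP : PartialOrder Y :=
  { le := fun y z => y = z ∨ ltY y z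
    le_refl := fun y => Or.inl rfl
    le_trans := by
      rintro x y z (rfl | hxy) (rfl | hyz)
      · exact Or.inl rfl
      · exact Or.inr hyz
      · exact Or.inr hxy
      · exact Or.inr (htrans hxy hyz)
    le_antisymm := by
      rintro x y (rfl | hxy) (h | hyx)
      · rfl
      · rfl
      · exact h.symm
      · exact absurd (htrans hxy hyx) (hirr x) }
  letI : Finite (LinearExtension Y) := inferInstanceAs (Finite Y)
  -- the sequence viewed as maps from the linear extension
  set L := LinearExtension Y
  let b : ℕ → L → A := fun i y => a i (y : Y)
  have key : ∀ i, Pi.Lex ((· < ·) : L → L → Prop) (fun {_} => ((· < ·) : A → A → Prop))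
      (b (i + 1)) (b i) := by
    intro i
    obtain ⟨hlex, hne⟩ := ha i
    obtain ⟨y0, hy0⟩ := Function.ne_iff.mp hne
    have hSne : {y : L | b (i + 1) y ≠ b i y}.Nonempty := ⟨y0, hy0⟩
    obtain ⟨y, hy, hmin⟩ := (Finite.to_wellFoundedLT (α := L)).wf.has_min _ hSne
    refine ⟨y, fun j hj => ?_, ?_⟩
    · by_contra hjne
      exact hmin j hjne hj
    · -- minimal differing point must strictly decrease
      by_cases hle : b (i + 1) y ≤ b i y
      · exact lt_of_le_of_ne hle hy
      · obtain ⟨ys, hys, hlt'⟩ := hlex (y : Y) hle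
        have hysne : (ys : Y) ≠ (y : Y) := fun h => hirr y (h ▸ hys)
        have hlty : (toLinearExtension ys : L) < (toLinearExtension (y : Y) : L) :=
          lt_of_le_of_ne (toLinearExtension.monotone (Or.inr hys))
            (fun h => hysne h)
        exact absurd hlty (hmin _ hlt'.ne)
  -- contradiction with well-foundedness of the lexicographic order
  have hwf := Pi.Lex.wellFounded ((· < ·) : L → L → Prop)
    (fun _ : L => hwfA)
  obtain ⟨x, ⟨k, rfl⟩, hmin⟩ := hwf.has_min (Set.range b) ⟨b 0, 0, rfl⟩
  exact hmin (b (k + 1)) ⟨k + 1, rfl⟩ (key k)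
end

section
/- Suppose R_≤ and R_< are relations on a set S such that R_≤ is a preorder, R_< is transitive and well-founded, and R_≤ ∘ R_< ⊆ R_< and R_< ∘ R_≤ ⊆ R_<. Then there exist a set A, a well-founded partial order ≤ on A, and a function f : S → A such that (s,t) ∈ R_≤ implies f(s) ≤ f(t) and (s,t) ∈ R_< implies f(s) < f(t). -/
universe u

/-- Conversely, relations `R_≤` (a preorder) and `R_<` (transitive,
well-founded) satisfying the composition closure properties arise as the
pullback of a well-founded partial order along some ranking function. -/
theorem stmt_12 (S : Type u) (Rle Rlt : S → S → Prop)
    (hrefl : ∀ s, Rle s s)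
    (htrans : ∀ s t v, Rle s t → Rle t v → Rle s v)
    (hlt_trans : ∀ s t v, Rlt s t → Rlt t v → Rlt s v)
    (hwf : WellFounded Rlt)
    (hcomp₁ : ∀ s v, (∃ t, Rle s t ∧ Rlt t v) → Rlt s v)
    (hcomp₂ : ∀ s v, (∃ t, Rlt s t ∧ Rle t v) → Rlt s v) :
    ∃ (A : Type u) (le : A → A → Prop) (f : S → A),
      (∀ a, le a a) ∧
      (∀ a b, le a b → le b a → a = b) ∧
      (∀ a b c, le a b → le b c → le a c) ∧
      WellFounded (fun a b => le a b ∧ a ≠ b) ∧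
      (∀ s t, Rle s t → le (f s) (f t)) ∧
      (∀ s t, Rlt s t → le (f s) (f t) ∧ f s ≠ f t) := by
  haveI : IsWellFounded S Rlt := ⟨hwf⟩
  set r : S → Ordinal.{u} := IsWellFounded.rank Rlt with hr
  have hlt : ∀ s t, Rlt s t → r s < r t := fun s t h => IsWellFounded.rank_lt_of_rel h
  have hle : ∀ s t, Rle s t → r s ≤ r t := by
    intro s t h
    rw [hr, IsWellFounded.rank_eq]
    apply Ordinal.iSup_le
    rintro ⟨u, hu⟩
    rw [Order.succ_le_iff]
    exact hlt u t (hcomp₂ u t ⟨s, hu, h⟩)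
  let st : Setoid S := ⟨fun s t => r s = r t, ⟨fun _ => rfl, Eq.symm, Eq.trans⟩⟩
  have hresp : ∀ (a b a' b' : S), a ≈ a' → b ≈ b' →
      (fun s t => r s ≤ r t) a b = (fun s t => r s ≤ r t) a' b' := by
    intro a b a' b' ha hb
    simp only [eq_iff_iff]
    rw [show r a = r a' from ha, show r b = r b' from hb]
  refine ⟨Quotient st, Quotient.lift₂ (fun s t => r s ≤ r t) hresp,
    Quotient.mk st, ?_, ?_, ?_, ?_, ?_, ?_⟩
  · rintro ⟨a⟩; exact le_refl (r a)
  · rintro ⟨a⟩ ⟨b⟩ h1 h2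
    exact Quotient.sound (le_antisymm h1 h2)
  · rintro ⟨a⟩ ⟨b⟩ ⟨c⟩ h1 h2; exact le_trans h1 h2
  · have : ∀ (x y : Quotient st),
        ((Quotient.lift₂ (fun s t => r s ≤ r t) hresp x y ∧ x ≠ y) →
          Quotient.lift r (fun a b h => h) x < Quotient.lift r (fun a b h => h) y) := by
      rintro ⟨a⟩ ⟨b⟩ ⟨h1, h2⟩
      exact lt_of_le_of_ne h1 (fun h => h2 (Quotient.sound h))
    exact Subrelation.wf (fun {x y} h => this x y h) (InvImage.wf _ Ordinal.lt_wf)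
  · intro s t h; exact hle s t h
  · intro s t h
    exact ⟨le_of_lt (hlt s t h), fun he => absurd (Quotient.exact he) (ne_of_lt (hlt s t h))⟩
end

section
/- Let S be a set of states, τ ⊆ S × S a transition relation, q, r ⊆ S, and suppose there exist a well-founded partial order (A, ≤), a function f : S → A, and an invariant φ ⊆ S such that: (1) every initial state not in q is in φ; (2) if s ∈ φ, (s,s') ∈ τ and s' ∉ q then s' ∈ φ; (3) if s ∈ φ, (s,s') ∈ τ and s' ∉ q then f(s') ≤ f(s); (4) if s ∈ φ ∩ r, (s,s') ∈ τ and s' ∉ q then f(s') < f(s). Then every trace (infinite sequence s₀, s₁, ... with s₀ initial and (sᵢ, s_{i+1}) ∈ τ for all i) that visits r infinitely often eventually visits q. -/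
/-!
Suppose the trace never visits `q`. Then the invariant holds all along it, so the rank `f (tr i)`
never increases, and it strictly drops after each of the infinitely many visits to `r`. An
antitone sequence in a well-founded order is eventually constant, so it cannot drop infinitely
often.
-/

theorem Antitone.not_frequently_lt_succ {A : Type*} [PartialOrder A] [WellFoundedLT A]
    {u : ℕ → A} (hu : Antitone u) : ¬ ∀ N, ∃ i, N ≤ i ∧ u (i + 1) < u i := by
  intro hdrop
  obtain ⟨n, hconst⟩ := WellFoundedLT.antitone_chain_condition hu
  obtain ⟨i, hni, hlt⟩ := hdrop n
  rw [← hconst i hni, ← hconst (i + 1) (by omega)] at hlt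
  exact lt_irrefl _ hlt

section Trace

variable {S : Type*} {τ : S → S → Prop} {q φ : Set S} {tr : ℕ → S}

theorem trace_mem_invariant (hstep : ∀ s s', s ∈ φ → τ s s' → s' ∉ q → s' ∈ φ)
    (h0 : tr 0 ∈ φ) (hτ : ∀ i, τ (tr i) (tr (i + 1))) (hq : ∀ i, tr i ∉ q) (i : ℕ) :
    tr i ∈ φ := by
  induction i with
  | zero => exact h0
  | succ n ih => exact hstep _ _ ih (hτ n) (hq (n + 1))

theorem antitone_rank_comp_trace {A : Type*} [Preorder A] {f : S → A}
    (hrank : ∀ s s', s ∈ φ → τ s s' → s' ∉ q → f s' ≤ f s) (hφ : ∀ i, tr i ∈ φ)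
    (hτ : ∀ i, τ (tr i) (tr (i + 1))) (hq : ∀ i, tr i ∉ q) : Antitone (f ∘ tr) :=
  antitone_nat_of_succ_le fun n => hrank _ _ (hφ n) (hτ n) (hq (n + 1))

end Trace

/-- Ranking-based proof rule for liveness: given a well-founded partial order
`A`, a ranking function `f` and an invariant `φ` satisfying premises (1)–(4),
every trace visiting `r` infinitely often eventually visits `q`. -/
theorem stmt_13 (S A : Type*) [PartialOrder A]
    (hwf : WellFounded ((· < ·) : A → A → Prop))
    (τ : S → S → Prop) (ι q r φ : Set S) (f : S → A)
    (h1 : ∀ s ∈ ι, s ∉ q → s ∈ φ)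
    (h2 : ∀ s s', s ∈ φ → τ s s' → s' ∉ q → s' ∈ φ)
    (h3 : ∀ s s', s ∈ φ → τ s s' → s' ∉ q → f s' ≤ f s)
    (h4 : ∀ s s', s ∈ φ → s ∈ r → τ s s' → s' ∉ q → f s' < f s)
    (tr : ℕ → S) (h0 : tr 0 ∈ ι) (hτ : ∀ i, τ (tr i) (tr (i + 1)))
    (hfair : ∀ N, ∃ i, N ≤ i ∧ tr i ∈ r) :
    ∃ i, tr i ∈ q := by
  by_contra! hq
  have : WellFoundedLT A := ⟨hwf⟩
  have hφ := trace_mem_invariant h2 (h1 _ h0 (hq 0)) hτ hq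
  refine (antitone_rank_comp_trace h3 hφ hτ hq).not_frequently_lt_succ fun N => ?_
  obtain ⟨i, hNi, hr⟩ := hfair N
  exact ⟨i, hNi, h4 _ _ (hφ i) hr (hτ i) (hq (i + 1))⟩
end

section
/- Let S be a set of states with initial states ι ⊆ S and transitions τ ⊆ S × S; let p, q ⊆ S, fairness predicates r₁,...,rₙ ⊆ S, helpful predicates ψ₁,...,ψₙ ⊆ S, invariants ρ, φ ⊆ S, a well-founded partial order (A,≤) and f : S → A satisfying: (1) ι ⊆ ρ; (2) ρ is closed under τ; (3) ρ ∩ p ∩ qᶜ ⊆ φ; (4) if s ∈ φ, (s,s') ∈ τ, s' ∉ q then s' ∈ φ; (5) under the same hypotheses f(s') ≤ f(s); (6) φ ⊆ ⋃ᵢ ψᵢ; (7) if s ∈ φ ∩ ψᵢ ∩ rᵢᶜ, (s,s') ∈ τ, s' ∉ q then s' ∈ ψᵢ; (8) if s ∈ φ ∩ ψᵢ ∩ rᵢ, (s,s') ∈ τ, s' ∉ q then f(s') < f(s). Then every trace starting in ι visiting each rᵢ infinitely often satisfies: whenever a state is in p, some later state is in q. -/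
/-- General response-property proof rule with parameterized fairness and
helpful (stable scheduler) predicates: under premises (1)–(8), on every fair
trace, every state in `p` is followed by a state in `q`. -/
theorem stmt_14 (S A : Type*) [PartialOrder A]
    (hwf : WellFounded ((· < ·) : A → A → Prop))
    (τ : S → S → Prop) (ι p q ρ φ : Set S) (n : ℕ)
    (r ψ : Fin n → Set S) (f : S → A)
    (h1 : ι ⊆ ρ)
    (h2 : ∀ s s', s ∈ ρ → τ s s' → s' ∈ ρ)
    (h3 : ∀ s, s ∈ ρ → s ∈ p → s ∉ q → s ∈ φ)
    (h4 : ∀ s s', s ∈ φ → τ s s' → s' ∉ q → s' ∈ φ)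
    (h5 : ∀ s s', s ∈ φ → τ s s' → s' ∉ q → f s' ≤ f s)
    (h6 : ∀ s, s ∈ φ → ∃ i, s ∈ ψ i)
    (h7 : ∀ i s s', s ∈ φ → s ∈ ψ i → s ∉ r i → τ s s' → s' ∉ q → s' ∈ ψ i)
    (h8 : ∀ i s s', s ∈ φ → s ∈ ψ i → s ∈ r i → τ s s' → s' ∉ q → f s' < f s)
    (tr : ℕ → S) (h0 : tr 0 ∈ ι) (hτ : ∀ k, τ (tr k) (tr (k + 1)))
    (hfair : ∀ i : Fin n, ∀ N, ∃ j, N ≤ j ∧ tr j ∈ r i) :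
    ∀ k, tr k ∈ p → ∃ j, k ≤ j ∧ tr j ∈ q := by
  classical
  intro k hp
  by_contra hcon
  push_neg at hcon
  have hc : ∀ j, k ≤ j → tr j ∉ q := fun j hj => hcon j hj
  have hρ : ∀ j, tr j ∈ ρ := by
    intro j
    induction j with
    | zero => exact h1 h0
    | succ j ih => exact h2 _ _ ih (hτ j)
  have hφ : ∀ j, k ≤ j → tr j ∈ φ := by
    intro j hj
    induction j with
    | zero =>
      have hk : k = 0 := Nat.le_zero.mp hj
      subst hk
      exact h3 _ (hρ 0) hp (hc 0 le_rfl)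
    | succ j ih =>
      rcases Nat.lt_or_ge k (j + 1) with h | h
      · exact h4 _ _ (ih (Nat.lt_succ_iff.mp h)) (hτ j) (hc _ hj)
      · have hk : k = j + 1 := le_antisymm hj h
        rw [hk] at hp
        exact h3 _ (hρ _) hp (hc _ hj)
  have hmono : ∀ j l, k ≤ j → j ≤ l → f (tr l) ≤ f (tr j) := by
    intro j l hkj hjl
    induction l with
    | zero =>
      have : j = 0 := Nat.le_zero.mp hjl
      rw [this]
    | succ l ih =>
      rcases Nat.lt_or_ge j (l + 1) with h | h
      · have h' : j ≤ l := Nat.lt_succ_iff.mp h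
        exact le_trans
          (h5 _ _ (hφ l (le_trans hkj h')) (hτ l) (hc _ (le_trans hkj hjl)))
          (ih h')
      · have : j = l + 1 := le_antisymm hjl h
        rw [this]
  have hdec : ∀ j, k ≤ j → ∃ j', k ≤ j' ∧ f (tr j') < f (tr j) := by
    intro j hj
    obtain ⟨i, hψj⟩ := h6 _ (hφ j hj)
    have hex : ∃ m, j ≤ m ∧ tr m ∈ r i := hfair i j
    set M := Nat.find hex with hM
    obtain ⟨hjM, hMr⟩ := Nat.find_spec hex
    have hψall : ∀ l, j ≤ l → l ≤ M → tr l ∈ ψ i := by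
      intro l hjl hlM
      induction l with
      | zero =>
        have : j = 0 := Nat.le_zero.mp hjl
        rw [← this]; exact hψj
      | succ l ih =>
        rcases Nat.lt_or_ge j (l + 1) with h | h
        · have h' : j ≤ l := Nat.lt_succ_iff.mp h
          have hlM' : l ≤ M := le_of_lt (Nat.lt_of_succ_le hlM)
          have hnr : tr l ∉ r i := by
            intro hr
            have := Nat.find_min hex (m := l) (Nat.lt_of_succ_le hlM)
            exact this ⟨h', hr⟩
          exact h7 i _ _ (hφ l (le_trans hj h')) (ih h' hlM') hnr (hτ l)
            (hc _ (le_trans hj (le_trans h' (Nat.le_succ l))))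
        · have : j = l + 1 := le_antisymm hjl h
          rw [← this]; exact hψj
    have hψM : tr M ∈ ψ i := hψall M hjM le_rfl
    have hlt : f (tr (M + 1)) < f (tr M) :=
      h8 i _ _ (hφ M (le_trans hj hjM)) hψM hMr (hτ M)
        (hc _ (le_trans hj (le_trans hjM (Nat.le_succ M))))
    exact ⟨M + 1, le_trans hj (le_trans hjM (Nat.le_succ M)),
      lt_of_lt_of_le hlt (hmono j M hj hjM)⟩
  obtain ⟨a, ha, hmin⟩ := hwf.has_min {a | ∃ j, k ≤ j ∧ f (tr j) = a}
    ⟨f (tr k), k, le_rfl, rfl⟩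
  obtain ⟨j, hj, rfl⟩ := ha
  obtain ⟨j', hj', hlt⟩ := hdec j hj
  exact hmin _ ⟨j', hj', rfl⟩ hlt
end
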